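/- arXiv:0711.3759 — 2 statements merged into one kernel-verified Lean document; each statement's English description precedes it below -/
import Mathlib

section
/- (Proposition 1.4.) Fix t_0 ∈ ℂ, and suppose s ∈ {1,…,n} and scalars u_i ∈ ℂ (i ≠ s) are such that rank M^{X,s}_2(t_0, u) ≤ 2n (i.e. the corresponding fibre point x lies in Φ_2(X)). Then the row space of M^{X,s}_2(t_0, u) equals the direct sum ⨁_{i=1}^n ι_i(row space of M^i_1(t_0)) of the (embedded) tangent-line cones of the curves C_i at parameter t_0; in particular rank M^{X,s}_2(t_0, u) = 2n exactly, and the row space (hence Osc^2_x(X), a projective (2n−1)-plane) is the same for all choices of s and u with rank M^{X,s}_2(t_0, u) ≤ 2n. -/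
open Matrix

/-- The `k`-th jet matrix `M^i_k(t)` of a parametrized curve. -/
noncomputable def curveJet (r : ℕ) (a : ℂ → Fin (r + 1) → ℂ) (k : ℕ) (t : ℂ) :
    Matrix (Fin (k + 1)) (Fin (r + 1)) ℂ :=
  Matrix.of fun l j => iteratedDeriv (l : ℕ) (fun s => a s j) t

/-- The `i`-th block inclusion `ι_i : ℂ^{r_i+1} → V`. -/
noncomputable def blockIncl {n : ℕ} (r : Fin n → ℕ) (i : Fin n)
    (v : Fin (r i + 1) → ℂ) : (Σ j : Fin n, Fin (r j + 1)) → ℂ :=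
  fun p => if h : p.1 = i then v (Fin.cast (by rw [h]) p.2) else 0

/-- The `k`-th jet matrix `M^{X,s}_k(t,u)` of the decomposable scroll. -/
noncomputable def scrollJet {n : ℕ} (r : Fin n → ℕ)
    (a : ∀ i : Fin n, ℂ → Fin (r i + 1) → ℂ) (k : ℕ) (s : Fin n) (t : ℂ)
    (u : Fin n → ℂ) :
    Matrix (Fin (k + 1) ⊕ ({i : Fin n // i ≠ s} × Fin k))
      (Σ j : Fin n, Fin (r j + 1)) ℂ :=
  Matrix.of fun row =>
    match row with
    | Sum.inl l =>
        blockIncl r s (curveJet (r s) (a s) k t l) +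
          ∑ i ∈ Finset.univ.filter (fun i => i ≠ s),
            u i • blockIncl r i (curveJet (r i) (a i) k t l)
    | Sum.inr q =>
        blockIncl r q.1.1 (curveJet (r q.1.1) (a q.1.1) k t q.2.castSucc)

/-- The row space of a matrix, i.e. the span of its rows. -/
noncomputable def rowSpace {m α : Type*} [Fintype m] (M : Matrix m α ℂ) : Submodule ℂ (α → ℂ) :=
  Submodule.span ℂ (Set.range fun i => M i)

/-!
The vectors `ι_i(a^i(t₀))` and `ι_i((a^i)'(t₀))` all lie in the row space of `M^{X,s}_2(t₀,u)`:
for `i ≠ s` they are rows of its lower block, and for `i = s` they are the first two rows of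
its upper block minus a combination of those. They are linearly independent, because the blocks
`ι_i` are independent and each curve is immersed at `t₀`. So the row space contains a
`2n`-dimensional subspace, and the hypothesis `rank ≤ 2n` forces equality.
-/

theorem Matrix.linearIndependent_row_of_rank_eq_card {m α K : Type*} [Field K] [Fintype m]
    [Fintype α] {A : Matrix m α K} (h : A.rank = Fintype.card m) : LinearIndependent K A.row := by
  rw [linearIndependent_iff_card_eq_finrank_span, Set.finrank, ← rank_eq_finrank_span_row, h]

theorem rank_eq_finrank_rowSpace {m α : Type*} [Fintype m] [Fintype α] (M : Matrix m α ℂ) :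
    M.rank = Module.finrank ℂ (rowSpace M) :=
  M.rank_eq_finrank_span_row

theorem blockIncl_eq_sigma_uncurry {n : ℕ} (r : Fin n → ℕ) (i : Fin n)
    (v : Fin (r i + 1) → ℂ) : blockIncl r i v =
      Sigma.uncurry (γ := fun _ _ => ℂ) (Pi.single (M := fun j => Fin (r j + 1) → ℂ) i v) := by
  funext ⟨j, l⟩
  by_cases h : j = i
  · subst h
    simp [blockIncl, Sigma.uncurry]
  · simp [blockIncl, Sigma.uncurry, h]

theorem linearIndependent_blockIncl {n : ℕ} {r : Fin n → ℕ} {κ : Fin n → Type*}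
    {f : ∀ i, κ i → Fin (r i + 1) → ℂ} (hf : ∀ i, LinearIndependent ℂ (f i)) :
    LinearIndependent ℂ fun p : Σ i, κ i => blockIncl r p.1 (f p.1 p.2) := by
  let uncurry := (LinearEquiv.piCurry ℂ fun j (_ : Fin (r j + 1)) => ℂ).symm
  simp only [blockIncl_eq_sigma_uncurry]
  exact (Pi.linearIndependent_single f hf).map' uncurry.toLinearMap uncurry.ker

theorem blockIncl_curveJet_mem_rowSpace_scrollJet {n : ℕ} (r : Fin n → ℕ)
    (a : ∀ i : Fin n, ℂ → Fin (r i + 1) → ℂ) (k : ℕ) (s : Fin n) (t : ℂ) (u : Fin n → ℂ)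
    (i : Fin n) (l : Fin (k + 1)) :
    blockIncl r i (curveJet (r i) (a i) k t l) ∈ rowSpace (scrollJet r a (k + 1) s t u) := by
  -- Row `l.castSucc` of the `(k+1)`-jet is row `l` of the `k`-jet by definition, hence the `rfl`s.
  have lower_mem : ∀ j (hj : j ≠ s),
      blockIncl r j (curveJet (r j) (a j) k t l) ∈ rowSpace (scrollJet r a (k + 1) s t u) :=
    fun j hj => Submodule.subset_span ⟨Sum.inr (⟨j, hj⟩, l), rfl⟩
  by_cases hi : i = s
  · subst hi
    have upper_row : scrollJet r a (k + 1) i t u (Sum.inl l.castSucc) =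
        blockIncl r i (curveJet (r i) (a i) k t l) +
          ∑ j ∈ Finset.univ.filter (· ≠ i), u j • blockIncl r j (curveJet (r j) (a j) k t l) :=
      rfl
    rw [eq_sub_of_add_eq upper_row.symm]
    refine sub_mem (Submodule.subset_span ⟨Sum.inl l.castSucc, rfl⟩) ?_
    exact Submodule.sum_mem _ fun j hj =>
      Submodule.smul_mem _ _ (lower_mem j (Finset.mem_filter.mp hj).2)
  · exact lower_mem i hi

theorem statement5_general {n : ℕ} (r : Fin n → ℕ)
    (a : ∀ i : Fin n, ℂ → Fin (r i + 1) → ℂ)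
    (hnd : ∀ i t, (curveJet (r i) (a i) 1 t).rank = 2)
    (t0 : ℂ) (s : Fin n) (u : Fin n → ℂ)
    (h : (scrollJet r a 2 s t0 u).rank ≤ 2 * n) :
    rowSpace (scrollJet r a 2 s t0 u) =
      Submodule.span ℂ (⋃ i : Fin n,
        Set.range fun l : Fin 2 => blockIncl r i (curveJet (r i) (a i) 1 t0 l)) ∧
    (scrollJet r a 2 s t0 u).rank = 2 * n := by
  rw [← Set.range_sigma_eq_iUnion_range
    (fun p : Σ _ : Fin n, Fin 2 => blockIncl r p.1 (curveJet (r p.1) (a p.1) 1 t0 p.2))]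
  set T := Submodule.span ℂ (Set.range
    fun p : Σ _ : Fin n, Fin 2 => blockIncl r p.1 (curveJet (r p.1) (a p.1) 1 t0 p.2))
  have hT_le : T ≤ rowSpace (scrollJet r a 2 s t0 u) :=
    Submodule.span_le.mpr <| Set.range_subset_iff.mpr fun p =>
      blockIncl_curveJet_mem_rowSpace_scrollJet r a 1 s t0 u p.1 p.2
  have hT_finrank : Module.finrank ℂ T = 2 * n := by
    have hli : LinearIndependent ℂ
        fun p : Σ _ : Fin n, Fin 2 => blockIncl r p.1 (curveJet (r p.1) (a p.1) 1 t0 p.2) :=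
      linearIndependent_blockIncl (κ := fun _ => Fin 2)
        (f := fun i => (curveJet (r i) (a i) 1 t0).row) fun i =>
        (curveJet (r i) (a i) 1 t0).linearIndependent_row_of_rank_eq_card (by simp [hnd])
    rw [finrank_span_eq_card hli]
    simp [mul_comm]
  have hT_eq : T = rowSpace (scrollJet r a 2 s t0 u) :=
    Submodule.eq_of_le_of_finrank_le hT_le (by rwa [hT_finrank, ← rank_eq_finrank_rowSpace])
  exact ⟨hT_eq.symm, by rw [rank_eq_finrank_rowSpace, ← hT_eq, hT_finrank]⟩

/-- Proposition 1.4: if a fibre point lies in `Φ₂(X)`, then the row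
space of its second jet matrix equals the (direct) sum of the embedded tangent-line
cones `ι_i(row space of M^i_1(t0))` of the curves; in particular the rank is
exactly `2n`, and the second osculating space is the same for all such points of
the fibre (the right-hand side does not depend on `s`, `u`). -/
theorem statement5 {n : ℕ} (hn : 2 ≤ n) (r : Fin n → ℕ) (hr : ∀ i, 1 ≤ r i)
    (a : ∀ i : Fin n, ℂ → Fin (r i + 1) → ℂ)
    (hent : ∀ i j, Differentiable ℂ fun t => a i t j)
    (hnd : ∀ i t, (curveJet (r i) (a i) 1 t).rank = 2)
    (t0 : ℂ) (s : Fin n) (u : Fin n → ℂ)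
    (h : (scrollJet r a 2 s t0 u).rank ≤ 2 * n) :
    rowSpace (scrollJet r a 2 s t0 u) =
      Submodule.span ℂ (⋃ i : Fin n,
        Set.range fun l : Fin 2 => blockIncl r i (curveJet (r i) (a i) 1 t0 l)) ∧
    (scrollJet r a 2 s t0 u).rank = 2 * n :=
  statement5_general r a hnd t0 s u h
end

section
/- (Remark 2.2.) Fix t_0 ∈ ℂ, s ∈ {1,…,n} and an integer k ≥ 2. If rank M^{X,s}_k(t_0, 0) ≤ nk (i.e. the point p_s of C_s lies in Φ_k(X)), then either rank M^s_k(t_0) ≤ k (i.e. p_s ∈ Φ_k(C_s)), or there exists j ≠ s with rank M^j_{k-1}(t_0) ≤ k−1 (i.e. p_j ∈ Φ_{k−1}(C_j)). -/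
open Matrix

/-!
At `u = 0` the jet matrix of the scroll is block diagonal up to a permutation of rows: the rows
`ι_s(row l of M^s_k)` live in the `s`-th block and the rows `ι_j(row m of M^j_{k-1})` in the
`j`-th block. If `M^s_k` has full rank `k + 1` and every `M^j_{k-1}`, `j ≠ s`, has full rank `k`,
all `(k + 1) + (n - 1) k = nk + 1` rows are independent, so `p_s ∉ Φ_k(X)`.
-/

theorem LinearIndependent.of_blocks {ι κ R V : Type*} {W : κ → Type*} [Fintype ι] [Ring R]
    [AddCommGroup V] [Module R V] [∀ c, AddCommGroup (W c)] [∀ c, Module R (W c)]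
    {f : ι → V} (π : ι → κ) (P : ∀ c, V →ₗ[R] W c)
    (hP : ∀ x c, π x ≠ c → P c (f x) = 0)
    (hind : ∀ c, LinearIndepOn R (fun x => P c (f x)) (π ⁻¹' {c})) :
    LinearIndependent R f := by
  classical
  refine Fintype.linearIndependent_iff.2 fun g hg x => ?_
  have hfibre : ∑ y : π ⁻¹' {π x}, g y • P (π x) (f y) = 0 := by
    have hPg := congrArg (P (π x)) hg
    simp only [map_sum, map_smul, map_zero] at hPg
    rwa [← Fintype.sum_subtype_add_sum_subtype (· ∈ π ⁻¹' {π x}),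
      Fintype.sum_eq_zero (fun y : {y // y ∉ π ⁻¹' {π x}} => g y • P (π x) (f y))
        (fun y => by rw [hP y (π x) y.2, smul_zero]), add_zero] at hPg
  exact Fintype.linearIndependent_iff.1 (hind (π x)) (fun y => g y) hfibre ⟨x, rfl⟩

theorem Matrix.linearIndependent_row_of_card_le_rank {m n R : Type*} [Fintype m] [Fintype n]
    [Field R] {A : Matrix m n R} (h : Fintype.card m ≤ A.rank) : LinearIndependent R A.row := by
  rw [linearIndependent_iff_card_eq_finrank_span, Set.finrank, ← A.rank_eq_finrank_span_row]
  exact h.antisymm A.rank_le_card_height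

theorem curveJet_castSucc (r : ℕ) (a : ℂ → Fin (r + 1) → ℂ) (k : ℕ) (t : ℂ) (l : Fin (k + 1)) :
    curveJet r a (k + 1) t l.castSucc = curveJet r a k t l :=
  rfl

theorem linearIndependent_curveJet_castSucc {r : ℕ} {a : ℂ → Fin (r + 1) → ℂ} {k : ℕ} {t : ℂ}
    (h : k - 1 < (curveJet r a (k - 1) t).rank) :
    LinearIndependent ℂ fun m : Fin k => curveJet r a k t m.castSucc := by
  cases k with
  | zero => exact linearIndependent_empty_type
  | succ k =>
    simp only [curveJet_castSucc]
    exact linearIndependent_row_of_card_le_rank (by rw [Fintype.card_fin]; exact h)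

section Scroll

variable {n : ℕ} (r : Fin n → ℕ)

theorem blockIncl_apply_self (i : Fin n) (v : Fin (r i + 1) → ℂ) (c : Fin (r i + 1)) :
    blockIncl r i v ⟨i, c⟩ = v c := by
  simp [blockIncl]

theorem blockIncl_apply_of_ne {i j : Fin n} (hij : i ≠ j) (v : Fin (r i + 1) → ℂ)
    (c : Fin (r j + 1)) : blockIncl r i v ⟨j, c⟩ = 0 := by
  simp [blockIncl, hij.symm]

variable (a : ∀ i : Fin n, ℂ → Fin (r i + 1) → ℂ) (k : ℕ) (s : Fin n) (t : ℂ)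

theorem scrollJet_zero_inl (l : Fin (k + 1)) :
    scrollJet r a k s t (fun _ => 0) (Sum.inl l) = blockIncl r s (curveJet (r s) (a s) k t l) := by
  simp only [scrollJet, zero_smul, Finset.sum_const_zero, add_zero]
  rfl

theorem scrollJet_inr (u : Fin n → ℂ) (q : {i : Fin n // i ≠ s} × Fin k) :
    scrollJet r a k s t u (Sum.inr q) =
      blockIncl r q.1.1 (curveJet (r q.1.1) (a q.1.1) k t q.2.castSucc) :=
  rfl

def scrollJetRowBlock : Fin (k + 1) ⊕ ({i : Fin n // i ≠ s} × Fin k) → Fin n :=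
  Sum.elim (fun _ => s) (fun q => q.1.1)

theorem linearIndependent_row_scrollJet_zero
    (hs : LinearIndependent ℂ (curveJet (r s) (a s) k t).row)
    (hother : ∀ j ≠ s, LinearIndependent ℂ fun m : Fin k => curveJet (r j) (a j) k t m.castSucc) :
    LinearIndependent ℂ (scrollJet r a k s t fun _ => 0).row := by
  refine .of_blocks (scrollJetRowBlock k s) (fun c => LinearMap.funLeft ℂ ℂ (Sigma.mk c))
    ?_ fun c => ?_
  · rintro (l | q) c hc <;> ext x
    · simpa [scrollJet_zero_inl] using blockIncl_apply_of_ne r (i := s) hc _ x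
    · simpa [scrollJet_inr] using blockIncl_apply_of_ne r (i := q.1.1) hc _ x
  by_cases hc : c = s
  · subst hc
    have hfibre : scrollJetRowBlock k c ⁻¹' {c} = Set.range Sum.inl := by
      ext (l | ⟨⟨j, hjs⟩, m⟩)
      · simp [scrollJetRowBlock]
      · simp [scrollJetRowBlock, hjs]
    rw [hfibre, linearIndepOn_range_iff Sum.inl_injective]
    have hrows : (fun x => LinearMap.funLeft ℂ ℂ (Sigma.mk c)
        ((scrollJet r a k c t fun _ => 0).row x)) ∘ Sum.inl = (curveJet (r c) (a c) k t).row := by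
      ext l x
      simpa [scrollJet_zero_inl] using blockIncl_apply_self r c _ x
    rw [hrows]
    exact hs
  · have hfibre : scrollJetRowBlock k s ⁻¹' {c} =
        Set.range fun m : Fin k => (Sum.inr (⟨c, hc⟩, m) : Fin (k + 1) ⊕ _) := by
      ext (l | ⟨⟨j, _⟩, m⟩) <;> simp [scrollJetRowBlock, Ne.symm hc, eq_comm]
    rw [hfibre, linearIndepOn_range_iff fun m m' h => by simpa using h]
    have hrows : (fun x => LinearMap.funLeft ℂ ℂ (Sigma.mk c)
        ((scrollJet r a k s t fun _ => 0).row x)) ∘ (fun m : Fin k => Sum.inr (⟨c, hc⟩, m)) =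
        fun m : Fin k => curveJet (r c) (a c) k t m.castSucc := by
      ext m x
      simpa [scrollJet_inr] using blockIncl_apply_self r c _ x
    rw [hrows]
    exact hother c hc

theorem rank_scrollJet_zero
    (hs : LinearIndependent ℂ (curveJet (r s) (a s) k t).row)
    (hother : ∀ j ≠ s, LinearIndependent ℂ fun m : Fin k => curveJet (r j) (a j) k t m.castSucc) :
    (scrollJet r a k s t fun _ => 0).rank = n * k + 1 := by
  rw [(linearIndependent_row_scrollJet_zero r a k s t hs hother).rank_matrix]
  obtain ⟨n, rfl⟩ := Nat.exists_eq_add_one.2 s.pos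
  simp only [Fintype.card_sum, Fintype.card_fin, Fintype.card_prod, Fintype.card_subtype_compl,
    Fintype.card_unique, add_tsub_cancel_right]
  ring

end Scroll

theorem statement7_general {n : ℕ} (r : Fin n → ℕ)
    (a : ∀ i : Fin n, ℂ → Fin (r i + 1) → ℂ)
    (t0 : ℂ) (s : Fin n) (k : ℕ)
    (h : (scrollJet r a k s t0 (fun _ => 0)).rank ≤ n * k) :
    (curveJet (r s) (a s) k t0).rank ≤ k ∨
      ∃ j, j ≠ s ∧ (curveJet (r j) (a j) (k - 1) t0).rank ≤ k - 1 := by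
  by_contra! hfull
  obtain ⟨hs, hj⟩ := hfull
  have hrank := rank_scrollJet_zero r a k s t0
    (linearIndependent_row_of_card_le_rank (by rw [Fintype.card_fin]; exact hs))
    (fun j hne => linearIndependent_curveJet_castSucc (hj j hne))
  omega

/-- Remark 2.2: if `p_s ∈ Φ_k(X)`, then either `p_s ∈ Φ_k(C_s)`, or
`p_j ∈ Φ_{k-1}(C_j)` for some `j ≠ s`. -/
theorem statement7 {n : ℕ} (hn : 2 ≤ n) (r : Fin n → ℕ) (hr : ∀ i, 1 ≤ r i)
    (a : ∀ i : Fin n, ℂ → Fin (r i + 1) → ℂ)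
    (hent : ∀ i j, Differentiable ℂ fun t => a i t j)
    (hnd : ∀ i t, (curveJet (r i) (a i) 1 t).rank = 2)
    (t0 : ℂ) (s : Fin n) (k : ℕ) (hk : 2 ≤ k)
    (h : (scrollJet r a k s t0 (fun _ => 0)).rank ≤ n * k) :
    (curveJet (r s) (a s) k t0).rank ≤ k ∨
      ∃ j, j ≠ s ∧ (curveJet (r j) (a j) (k - 1) t0).rank ≤ k - 1 :=
  statement7_general r a t0 s k h
end
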